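/- Horizontalisation computes pullbacks: for every form α ∈ Λ^q(J^r(E,n)) with 0 ≤ q ≤ n and every n-dimensional submanifold L ⊂ E, one has (j_r L)*α = (j_{r+1}L)* h^{0,q}(α), where h^{0,q}(α) is the pseudo-horizontal part obtained by restricting π*_{r+1,r}α along the inclusion D^{r+1} : H^{r+1,r} → T^{r+1,r}. -/

import Mathlib

/-- Multi-indices in `n` variables of total degree at most `r`. -/
abbrev MIdx (n r : ℕ) : Type := {σ : Fin n → Fin (r + 1) // ∑ i, (σ i : ℕ) ≤ r}

/-- The local model of the jet space `J^r(E,n)`: coordinates `(x^λ, u^i_σ)`, `|σ| ≤ r`. -/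
abbrev JetSp (n m r : ℕ) : Type := (Fin n → ℝ) × ((Fin m × MIdx n r) → ℝ)

/-- Partial derivative in the `i`-th coordinate direction. -/
noncomputable def pd {n : ℕ} (i : Fin n) (g : (Fin n → ℝ) → ℝ) : (Fin n → ℝ) → ℝ :=
  fun x => fderiv ℝ g x (Pi.single i 1)

/-- Iterated partial derivative `D_σ` for a multi-index `σ`. -/
noncomputable def pdMulti {n : ℕ} (σ : Fin n → ℕ) (g : (Fin n → ℝ) → ℝ) :
    (Fin n → ℝ) → ℝ :=
  (List.finRange n).foldr (fun i h => (pd i)^[σ i] h) g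

/-- The `r`-th prolongation `j_r f` of `f : ℝⁿ → ℝᵐ`: `u^i_σ ∘ j_r f = ∂^σ f^i`. -/
noncomputable def prolong (n m r : ℕ) (f : (Fin n → ℝ) → (Fin m → ℝ)) :
    (Fin n → ℝ) → JetSp n m r :=
  fun x => (x, fun p => pdMulti (fun i => (p.2.1 i : ℕ)) (fun y => f y p.1) x)

/-- `σ, λ`: add `1` to the multi-index `σ` in slot `lam`. -/
def MIdx.addOne {n r : ℕ} (σ : MIdx n r) (lam : Fin n) : MIdx n (r + 1) :=
  ⟨fun i => ⟨(σ.1 i : ℕ) + (if i = lam then 1 else 0), by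
      have := (σ.1 i).isLt; split <;> omega⟩, by
    show ∑ i, ((σ.1 i : ℕ) + (if i = lam then 1 else 0)) ≤ r + 1
    have hσ := σ.2
    rw [Finset.sum_add_distrib]
    simp
    omega⟩

/-- A multi-index of degree `≤ r` viewed as one of degree `≤ r+1`. -/
def MIdx.lift {n r : ℕ} (σ : MIdx n r) : MIdx n (r + 1) :=
  ⟨fun i => ⟨(σ.1 i : ℕ), by have := (σ.1 i).isLt; omega⟩, by
    show ∑ i, ((σ.1 i : ℕ)) ≤ r + 1
    exact le_trans σ.2 (Nat.le_succ r)⟩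

/-- The projection `π_{r+1,r}` in the local model. -/
def jetProj (n m r : ℕ) : JetSp n m (r + 1) → JetSp n m r :=
  fun ξ => (ξ.1, fun p => ξ.2 (p.1, p.2.lift))

/-- The value at `ξ ∈ J^{r+1}` of the pseudo-horizontal inclusion `D^{r+1}`: the linear map
`ℝⁿ → T J^r` sending `∂/∂x^λ ↦ ∂/∂x^λ + u^i_{σ,λ}(ξ) ∂/∂u^i_σ`. -/
noncomputable def Dmap (n m r : ℕ) (ξ : JetSp n m (r + 1)) :
    (Fin n → ℝ) →ₗ[ℝ] JetSp n m r :=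
  LinearMap.prod LinearMap.id
    (LinearMap.pi fun p : Fin m × MIdx n r =>
      ∑ lam : Fin n, ξ.2 (p.1, p.2.addOne lam) • LinearMap.proj lam)

/-- Horizontalisation `h^{0,q}`: `h^{0,q}(α)(ξ) = α(π_{r+1,r} ξ) ∘ D^{r+1}(ξ)`. -/
noncomputable def horiz (n m r q : ℕ)
    (α : JetSp n m r → (JetSp n m r [⋀^Fin q]→ₗ[ℝ] ℝ)) :
    JetSp n m (r + 1) → ((Fin n → ℝ) [⋀^Fin q]→ₗ[ℝ] ℝ) :=
  fun ξ => (α (jetProj n m r ξ)).compLinearMap (Dmap n m r ξ)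

/-- The pullback `(j_r f)^* α` along the prolongation of `f`, at `x`. -/
noncomputable def pullbackProlong (n m r q : ℕ)
    (α : JetSp n m r → (JetSp n m r [⋀^Fin q]→ₗ[ℝ] ℝ))
    (f : (Fin n → ℝ) → (Fin m → ℝ)) (x : Fin n → ℝ) :
    (Fin n → ℝ) [⋀^Fin q]→ₗ[ℝ] ℝ :=
  (α (prolong n m r f x)).compLinearMap (fderiv ℝ (prolong n m r f) x).toLinearMap


lemma pd_contDiff {n : ℕ} {g : (Fin n → ℝ) → ℝ} (hg : ContDiff ℝ (⊤ : ℕ∞) g) (i : Fin n) :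
    ContDiff ℝ (⊤ : ℕ∞) (pd i g) := by
  have h1 : ContDiff ℝ (⊤ : ℕ∞) (fderiv ℝ g) := hg.fderiv_right (by exact (by simp))
  exact h1.clm_apply contDiff_const

lemma pd_comm {n : ℕ} {g : (Fin n → ℝ) → ℝ} (hg : ContDiff ℝ (⊤ : ℕ∞) g) (i j : Fin n) :
    pd i (pd j g) = pd j (pd i g) := by
  have h1 : ContDiff ℝ (⊤ : ℕ∞) (fderiv ℝ g) := hg.fderiv_right (by exact (by simp))
  have hdiff : ∀ y, HasFDerivAt g (fderiv ℝ g y) y :=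
    fun y => (hg.differentiable (by simp) y).hasFDerivAt
  have hx : ∀ x, HasFDerivAt (fderiv ℝ g) (fderiv ℝ (fderiv ℝ g) x) x :=
    fun x => (h1.differentiable (by simp) x).hasFDerivAt
  funext x
  have key : ∀ v w : Fin n → ℝ,
      fderiv ℝ (fderiv ℝ g) x v w = fderiv ℝ (fderiv ℝ g) x w v :=
    fun v w => second_derivative_symmetric hdiff (hx x) v w
  have expand : ∀ w : Fin n → ℝ, ∀ v : Fin n → ℝ,
      fderiv ℝ (fun y => fderiv ℝ g y w) x v = fderiv ℝ (fderiv ℝ g) x v w := by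
    intro w v
    rw [fderiv_clm_apply (h1.differentiable (by simp) x) (differentiableAt_const w)]
    simp
  show fderiv ℝ (fun y => fderiv ℝ g y (Pi.single j 1)) x (Pi.single i 1)
      = fderiv ℝ (fun y => fderiv ℝ g y (Pi.single i 1)) x (Pi.single j 1)
  rw [expand, expand, key]

lemma pd_iter_contDiff {n : ℕ} {g : (Fin n → ℝ) → ℝ} (hg : ContDiff ℝ (⊤ : ℕ∞) g)
    (i : Fin n) (k : ℕ) : ContDiff ℝ (⊤ : ℕ∞) ((pd i)^[k] g) := by
  induction k generalizing g with
  | zero => exact hg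
  | succ k ih =>
    rw [Function.iterate_succ_apply]
    exact ih (pd_contDiff hg i)

lemma foldr_contDiff {n : ℕ} {g : (Fin n → ℝ) → ℝ} (hg : ContDiff ℝ (⊤ : ℕ∞) g)
    (σ : Fin n → ℕ) (l : List (Fin n)) :
    ContDiff ℝ (⊤ : ℕ∞) (l.foldr (fun i h => (pd i)^[σ i] h) g) := by
  induction l with
  | nil => exact hg
  | cons a t ih => exact pd_iter_contDiff ih a (σ a)

lemma pd_iterate_comm {n : ℕ} {g : (Fin n → ℝ) → ℝ} (hg : ContDiff ℝ (⊤ : ℕ∞) g)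
    (i j : Fin n) (k : ℕ) : pd j ((pd i)^[k] g) = (pd i)^[k] (pd j g) := by
  induction k generalizing g with
  | zero => rfl
  | succ k ih =>
    rw [Function.iterate_succ_apply, Function.iterate_succ_apply,
      ih (pd_contDiff hg i), pd_comm hg]

lemma pd_foldr_comm {n : ℕ} {g : (Fin n → ℝ) → ℝ} (hg : ContDiff ℝ (⊤ : ℕ∞) g)
    (σ : Fin n → ℕ) (j : Fin n) (l : List (Fin n)) :
    pd j (l.foldr (fun i h => (pd i)^[σ i] h) g)
      = l.foldr (fun i h => (pd i)^[σ i] h) (pd j g) := by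
  induction l with
  | nil => rfl
  | cons a t ih =>
    simp only [List.foldr_cons]
    rw [pd_iterate_comm (foldr_contDiff hg σ t), ih]

lemma foldr_congr_notmem {n : ℕ} (g : (Fin n → ℝ) → ℝ) (σ : Fin n → ℕ) (lam : Fin n)
    (l : List (Fin n)) (hl : lam ∉ l) :
    l.foldr (fun i h => (pd i)^[σ i + if i = lam then 1 else 0] h) g
      = l.foldr (fun i h => (pd i)^[σ i] h) g := by
  induction l with
  | nil => rfl
  | cons a t ih =>
    simp only [List.mem_cons, not_or] at hl
    simp only [List.foldr_cons, if_neg (Ne.symm hl.1), ih hl.2, Nat.add_zero]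

lemma foldr_addOne {n : ℕ} {g : (Fin n → ℝ) → ℝ} (hg : ContDiff ℝ (⊤ : ℕ∞) g)
    (σ : Fin n → ℕ) (lam : Fin n) (l : List (Fin n)) (hmem : lam ∈ l) (hnd : l.Nodup) :
    l.foldr (fun i h => (pd i)^[σ i + if i = lam then 1 else 0] h) g
      = l.foldr (fun i h => (pd i)^[σ i] h) (pd lam g) := by
  induction l with
  | nil => simp at hmem
  | cons a t ih =>
    rcases List.nodup_cons.1 hnd with ⟨ha, hndt⟩
    by_cases hal : a = lam
    · subst hal
      simp only [List.foldr_cons]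
      rw [foldr_congr_notmem g σ a t ha]
      simp only [if_true]
      rw [
        Function.iterate_succ_apply, ← pd_foldr_comm hg]
    · simp only [List.mem_cons] at hmem
      rcases hmem with h | hmt
      · exact absurd h.symm hal
      simp only [List.foldr_cons, if_neg hal, Nat.add_zero, ih hmt hndt]

lemma pd_pdMulti {n : ℕ} {g : (Fin n → ℝ) → ℝ} (hg : ContDiff ℝ (⊤ : ℕ∞) g)
    (σ : Fin n → ℕ) (lam : Fin n) :
    pd lam (pdMulti σ g) = pdMulti (fun i => σ i + if i = lam then 1 else 0) g := by
  unfold pdMulti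
  rw [pd_foldr_comm hg, foldr_addOne hg σ lam _ (List.mem_finRange lam) (List.nodup_finRange n)]

/-- horizontalisation computes pullbacks.  For every `q`-form `α` on
`J^r(E,n)` with `0 ≤ q ≤ n` and every `n`-dimensional submanifold (locally the graph of a
smooth map `f : ℝⁿ → ℝᵐ`), one has `(j_r L)^* α = (j_{r+1} L)^* h^{0,q}(α)`: at every point
`x`, the pullback of `α` along the `r`-th prolongation equals the value of the horizontalised
form `h^{0,q}(α)` at the `(r+1)`-jet of `f` at `x` (pulled back by the identity on the base). -/
theorem horizontalisation_computes_pullback (n m r q : ℕ) (hq : q ≤ n)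
    (α : JetSp n m r → (JetSp n m r [⋀^Fin q]→ₗ[ℝ] ℝ))
    (f : (Fin n → ℝ) → (Fin m → ℝ)) (hf : ContDiff ℝ (⊤ : ℕ∞) f) (x : Fin n → ℝ) :
    pullbackProlong n m r q α f x = horiz n m r q α (prolong n m (r + 1) f x) := by
  classical
  have hcomp : ∀ p : Fin m × MIdx n r, ContDiff ℝ (⊤ : ℕ∞) (fun y => f y p.1) :=
    fun p => contDiff_pi.1 hf p.1
  set G : (Fin m × MIdx n r) → (Fin n → ℝ) → ℝ :=
    fun p => pdMulti (fun i => (p.2.1 i : ℕ)) (fun y => f y p.1) with hGdef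
  have hGsmooth : ∀ p, ContDiff ℝ (⊤ : ℕ∞) (G p) := fun p => foldr_contDiff (hcomp p) _ _
  have hGdiff : ∀ p, DifferentiableAt ℝ (G p) x :=
    fun p => (hGsmooth p).differentiable (by simp) |>.differentiableAt
  have hDer : HasFDerivAt (prolong n m r f)
      ((ContinuousLinearMap.id ℝ (Fin n → ℝ)).prod
        (ContinuousLinearMap.pi fun p => fderiv ℝ (G p) x)) x :=
    HasFDerivAt.prodMk (hasFDerivAt_id x) (hasFDerivAt_pi.2 fun p => (hGdiff p).hasFDerivAt)
  have hfd := hDer.fderiv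
  have hL : (fderiv ℝ (prolong n m r f) x).toLinearMap
      = Dmap n m r (prolong n m (r + 1) f x) := by
    rw [hfd]
    apply LinearMap.ext; intro v
    refine Prod.ext rfl ?_
    funext p
    show fderiv ℝ (G p) x v
        = (LinearMap.pi fun p : Fin m × MIdx n r =>
            ∑ lam : Fin n, (prolong n m (r+1) f x).2 (p.1, p.2.addOne lam)
              • LinearMap.proj (R := ℝ) (φ := fun _ : Fin n => ℝ) lam) v p
    rw [LinearMap.pi_apply, LinearMap.sum_apply]
    have hv : v = ∑ lam : Fin n, Pi.single lam (v lam) :=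
      (Finset.univ_sum_single v).symm
    conv_lhs => rw [hv]
    rw [map_sum]
    refine Finset.sum_congr rfl fun lam _ => ?_
    have h1 : Pi.single lam (v lam) = v lam • (Pi.single lam 1 : Fin n → ℝ) := by
      rw [← Pi.single_smul, smul_eq_mul, mul_one]
    rw [h1, (fderiv ℝ (G p) x).map_smul]
    have h2 : fderiv ℝ (G p) x (Pi.single lam 1) = pd lam (G p) x := rfl
    rw [h2, pd_pdMulti (hcomp p)]
    simp only [LinearMap.smul_apply, LinearMap.proj_apply, smul_eq_mul]
    have h3 : (prolong n m (r+1) f x).2 (p.1, p.2.addOne lam)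
        = pdMulti (fun i => ((p.2.1 i : ℕ) + if i = lam then 1 else 0))
            (fun y => f y p.1) x := rfl
    rw [h3, mul_comm]
  have hjet : jetProj n m r (prolong n m (r + 1) f x) = prolong n m r f x := rfl
  unfold pullbackProlong horiz
  rw [hjet, hL]
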